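/- Let f : C → Set A be an atomized model, let d and e be terms over C such that f does not satisfy d ≤ e, and let f' be the full crossing of d into e. Then for all terms a, b over C: f' satisfies a ≤ b if and only if every atomized model over C (with any atom type) that satisfies d ≤ e and satisfies every positive relation between terms that f satisfies, also satisfies a ≤ b. (The full crossing enforces d ≤ e while reducing freedom by exactly the minimal amount: the resulting model satisfies precisely the positive relations entailed by T⁺(f) ∪ {d ≤ e}.) -/

import Mathlib

universe u

/-- The atom set of a term (set of constants) `t` under the atomized model `f`. -/
def atomSet {C A : Type*} (f : C → Set A) (t : Set C) : Set A := ⋃ c ∈ t, f c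

/-- The atomized model `f` satisfies the positive relation `s ≤ t`. -/
def Sat {C A : Type*} (f : C → Set A) (s t : Set C) : Prop := atomSet f s ⊆ atomSet f t

/-- The full crossing of the term `d` into the term `e` in the atomized model `f`. -/
def fullCross {C A : Type*} (f : C → Set A) (d e : Set C) : C → Set (A ⊕ A × A) :=
  fun c => {z | Sum.elim
    (fun x => x ∈ f c ∧ x ∉ atomSet f d \ atomSet f e)
    (fun p : A × A =>
      p.1 ∈ atomSet f d \ atomSet f e ∧ p.2 ∈ atomSet f e ∧ (p.1 ∈ f c ∨ p.2 ∈ f c)) z}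

/-!
The full crossing satisfies `d ≤ e` and every positive relation of `f`, which gives one
direction. Conversely, if it satisfies `a ≤ b`, then either `f` already does, or `f` satisfies
both `a ≤ b ∪ d` and `e ≤ b`; in the second case `a ≤ b ∪ d ≤ b ∪ e ≤ b` in any model of
`d ≤ e`.
-/

section AtomizedModel

variable {C A : Type*} {f : C → Set A} {s t u : Set C}

@[simp]
lemma mem_atomSet {x : A} : x ∈ atomSet f t ↔ ∃ c ∈ t, x ∈ f c := by
  simp [atomSet]

lemma atomSet_union : atomSet f (s ∪ t) = atomSet f s ∪ atomSet f t :=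
  Set.biUnion_union s t f

lemma Sat.refl (f : C → Set A) (s : Set C) : Sat f s s :=
  subset_rfl

lemma Sat.trans (hst : Sat f s t) (htu : Sat f t u) : Sat f s u :=
  Set.Subset.trans hst htu

lemma Sat.union (hsu : Sat f s u) (htu : Sat f t u) : Sat f (s ∪ t) u := by
  rw [Sat, atomSet_union]
  exact Set.union_subset hsu htu

end AtomizedModel

section FullCross

variable {C A : Type*} {f : C → Set A} {d e s t : Set C}

lemma inl_mem_atomSet_fullCross {x : A} :
    Sum.inl x ∈ atomSet (fullCross f d e) t ↔
      x ∈ atomSet f t ∧ x ∉ atomSet f d \ atomSet f e := by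
  simp only [mem_atomSet, fullCross, Set.mem_ofPred_eq, Sum.elim_inl]
  grind

lemma inr_mem_atomSet_fullCross {p : A × A} :
    Sum.inr p ∈ atomSet (fullCross f d e) t ↔
      p.1 ∈ atomSet f d \ atomSet f e ∧ p.2 ∈ atomSet f e ∧
        (p.1 ∈ atomSet f t ∨ p.2 ∈ atomSet f t) := by
  simp only [mem_atomSet, fullCross, Set.mem_ofPred_eq, Sum.elim_inr]
  grind

lemma sat_fullCross_self : Sat (fullCross f d e) d e := by
  rintro (x | p) hx
  · obtain ⟨hxd, hxΦ⟩ := inl_mem_atomSet_fullCross.1 hx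
    have hxe : x ∈ atomSet f e := by_contra fun hxe => hxΦ ⟨hxd, hxe⟩
    exact inl_mem_atomSet_fullCross.2 ⟨hxe, hxΦ⟩
  · obtain ⟨hp₁, hp₂, -⟩ := inr_mem_atomSet_fullCross.1 hx
    exact inr_mem_atomSet_fullCross.2 ⟨hp₁, hp₂, Or.inr hp₂⟩

lemma sat_fullCross_of_sat (hst : Sat f s t) : Sat (fullCross f d e) s t := by
  rintro (x | p) hx
  · obtain ⟨hxs, hxΦ⟩ := inl_mem_atomSet_fullCross.1 hx
    exact inl_mem_atomSet_fullCross.2 ⟨hst hxs, hxΦ⟩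
  · obtain ⟨hp₁, hp₂, hps⟩ := inr_mem_atomSet_fullCross.1 hx
    exact inr_mem_atomSet_fullCross.2 ⟨hp₁, hp₂, hps.imp (@hst _) (@hst _)⟩

/-- A witness `φ ∈ atomSet f a \ atomSet f b` must lie in `Φ = D \ E`, and then the crossed
atoms `(φ, ε)` force every `ε ∈ E` into `atomSet f b`. -/
lemma Sat.of_fullCross {a b : Set C} (hab : Sat (fullCross f d e) a b) :
    Sat f a b ∨ (Sat f a (b ∪ d) ∧ Sat f e b) := by
  have hout : ∀ x ∈ atomSet f a, x ∉ atomSet f d \ atomSet f e → x ∈ atomSet f b :=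
    fun x hxa hxΦ =>
      (inl_mem_atomSet_fullCross.1 (hab (inl_mem_atomSet_fullCross.2 ⟨hxa, hxΦ⟩))).1
  by_cases hfab : Sat f a b
  · exact Or.inl hfab
  obtain ⟨φ, hφa, hφb⟩ := Set.not_subset.1 hfab
  have hφΦ : φ ∈ atomSet f d \ atomSet f e := by_contra fun hφΦ => hφb (hout φ hφa hφΦ)
  refine Or.inr ⟨fun x hxa => ?_, fun ε hε => ?_⟩
  · rw [atomSet_union]
    by_cases hxΦ : x ∈ atomSet f d \ atomSet f e
    · exact Or.inr hxΦ.1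
    · exact Or.inl (hout x hxa hxΦ)
  · have hcross :=
      hab ((inr_mem_atomSet_fullCross (p := (φ, ε))).2 ⟨hφΦ, hε, Or.inl hφa⟩)
    exact (inr_mem_atomSet_fullCross.1 hcross).2.2.resolve_left hφb

end FullCross

theorem fullCross_minimal_freedom_loss_general {C : Type u} {A : Type u}
    (f : C → Set A) (d e : Set C) :
    ∀ a b : Set C,
      Sat (fullCross f d e) a b ↔
        ∀ (B : Type u) (g : C → Set B), Sat g d e →
          (∀ s t : Set C, Sat f s t → Sat g s t) → Sat g a b := by
  intro a b
  refine ⟨fun hab B g hgde hg => ?_,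
    fun h => h _ _ sat_fullCross_self fun _ _ => sat_fullCross_of_sat⟩
  rcases Sat.of_fullCross hab with hfab | ⟨hfabd, hfeb⟩
  · exact hg a b hfab
  · have hgdb : Sat g d b := hgde.trans (hg e b hfeb)
    exact (hg a _ hfabd).trans ((Sat.refl g b).union hgdb)

/-- If `f` does not satisfy `d ≤ e`, the full crossing of `d` into `e`
satisfies exactly the positive relations entailed by `T⁺(f) ∪ {d ≤ e}`: it reduces
freedom by the minimal amount needed to enforce `d ≤ e`. -/
theorem fullCross_minimal_freedom_loss {C : Type u} {A : Type u}
    (f : C → Set A) (d e : Set C) (hde : ¬ Sat f d e) :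
    ∀ a b : Set C,
      Sat (fullCross f d e) a b ↔
        ∀ (B : Type u) (g : C → Set B), Sat g d e →
          (∀ s t : Set C, Sat f s t → Sat g s t) → Sat g a b :=
  fullCross_minimal_freedom_loss_general f d e
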